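/- arXiv:2107.13726 — 3 statements merged into one kernel-verified Lean document; each statement's English description precedes it below -/
import Mathlib

section
/- Let R be a complete Noetherian local ring with maximal ideal m and finite residue field, M a finitely generated R-module, and u an R-linear endomorphism of M. Then the sequence (u^{n!})_{n≥1} converges in End_R(M) for the m-adic topology, its limit e is an idempotent commuting with u, u restricts to an automorphism of eM, and on (1−e)M the powers of u tend to 0 m-adically. -/
/-!
Modulo `m^k`, the powers of `u` live in the finite set `End(M) / m^k End(M)`, so they are
eventually periodic: `u^(s + p) ≡ u^s` for `s ≥ i`. As soon as `n ≥ max i p`, `n!` is a multiple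
of `p`, so `u^(n!)` is eventually constant modulo `m^k` and idempotent there. The finite
`R`-module `End(M)` is `m`-adically complete and separated, so `e = lim u^(n!)` and
`v = lim u^(n! - 1)` exist, with `u v = v u = e` and `e² = e`; thus `v` inverts `u` on `e M`.
Finally `u^n ≡ u^(n + j!) → u^n e`, i.e. `u^n (1 - e) → 0`.
-/

open Filter

section AdicLimits

variable {R : Type*} [CommRing R] {I : Ideal R}
  {M N : Type*} [AddCommGroup M] [Module R M] [AddCommGroup N] [Module R N]

theorem SModEq.map_smul_top {x y : M} (h : x ≡ y [SMOD (I • ⊤ : Submodule R M)])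
    (f : M →ₗ[R] N) : f x ≡ f y [SMOD (I • ⊤ : Submodule R N)] :=
  (h.map f).mono (Submodule.map_le_iff_le_comap.mpr (Submodule.smul_top_le_comap_smul_top I f))

def AdicTendsto (I : Ideal R) (f : ℕ → M) (L : M) : Prop :=
  ∀ k, ∀ᶠ n in atTop, f n ≡ L [SMOD (I ^ k • ⊤ : Submodule R M)]

namespace AdicTendsto

variable {f g : ℕ → M} {a b : M}

theorem unique [IsHausdorff I M] (ha : AdicTendsto I f a) (hb : AdicTendsto I f b) : a = b :=
  IsHausdorff.eq_iff_smodEq.mpr fun k =>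
    let ⟨_, ha, hb⟩ := ((ha k).and (hb k)).exists
    ha.symm.trans hb

theorem congr (hf : AdicTendsto I f a)
    (hfg : ∀ k, ∀ᶠ n in atTop, f n ≡ g n [SMOD (I ^ k • ⊤ : Submodule R M)]) :
    AdicTendsto I g a :=
  fun k => ((hf k).and (hfg k)).mono fun _ h => h.2.symm.trans h.1

theorem map (hf : AdicTendsto I f a) (ψ : M →ₗ[R] N) :
    AdicTendsto I (fun n => ψ (f n)) (ψ a) :=
  fun k => (hf k).mono fun _ h => h.map_smul_top ψ

theorem mul {A : Type*} [Ring A] [Algebra R A] {f g : ℕ → A} {a b : A}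
    (hf : AdicTendsto I f a) (hg : AdicTendsto I g b) :
    AdicTendsto I (fun n => f n * g n) (a * b) :=
  fun k => ((hf k).and (hg k)).mono fun n h =>
    (h.2.map_smul_top (LinearMap.mulLeft R (f n))).trans
      (h.1.map_smul_top (LinearMap.mulRight R b))

end AdicTendsto

namespace IsPrecomplete

theorem exists_adicTendsto [IsPrecomplete I M] {f : ℕ → M}
    (hf : ∀ k, ∃ N, ∀ m ≥ N, ∀ n ≥ N, f m ≡ f n [SMOD (I ^ k • ⊤ : Submodule R M)]) :
    ∃ L, AdicTendsto I f L := by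
  choose N hN using hf
  let N' : ℕ → ℕ := fun k => ∑ j ∈ Finset.range (k + 1), N j
  have hN' : ∀ {j k}, j ≤ k → N j ≤ N' k := fun hjk =>
    Finset.single_le_sum (fun _ _ => Nat.zero_le _) (Finset.mem_range_succ_iff.mpr hjk)
  obtain ⟨L, hL⟩ := IsPrecomplete.prec ‹_› (f := fun k => f (N' k))
    fun hjk => hN _ _ (hN' le_rfl) _ (hN' hjk)
  exact ⟨L, fun k => eventually_atTop.mpr
    ⟨N k, fun n hn => (hN k n hn _ (hN' le_rfl)).trans (hL k)⟩⟩

theorem of_surjective [IsPrecomplete I M] {f : M →ₗ[R] N} (hf : Function.Surjective f) :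
    IsPrecomplete I N := by
  refine AdicCompletion.of_surjective_iff.mp fun y => ?_
  obtain ⟨x, rfl⟩ := AdicCompletion.map_surjective_of_mkQ_comp_surjective
    ((Submodule.mkQ_surjective _).comp hf) y
  obtain ⟨m, rfl⟩ := AdicCompletion.of_surjective I M x
  exact ⟨f m, (AdicCompletion.map_of I f m).symm⟩

instance pi {ι : Type*} [Finite ι] {M : ι → Type*} [∀ i, AddCommGroup (M i)]
    [∀ i, Module R (M i)] [∀ i, IsPrecomplete I (M i)] : IsPrecomplete I (∀ i, M i) := by
  classical
  have := Fintype.ofFinite ι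
  refine AdicCompletion.of_surjective_iff.mp fun y => ?_
  choose x hx using fun i => AdicCompletion.of_surjective I (M i) (AdicCompletion.pi I M y i)
  refine ⟨x, (AdicCompletion.piEquivOfFintype I M).injective (funext fun i => ?_)⟩
  simp only [AdicCompletion.piEquivOfFintype_apply, ← hx i]
  ext n
  simp [AdicCompletion.pi_apply_coe]

theorem of_finite [IsPrecomplete I R] [Module.Finite R M] : IsPrecomplete I M :=
  let ⟨_, _, hf⟩ := Module.Finite.exists_fin' R M
  of_surjective hf

end IsPrecomplete

end AdicLimits

theorem IsLocalRing.finite_quotient_maximalIdeal_pow_smul_top {R : Type*} [CommRing R]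
    [IsNoetherianRing R] [IsLocalRing R] [Finite (ResidueField R)]
    (M : Type*) [AddCommGroup M] [Module R M] [Module.Finite R M] (k : ℕ) :
    Finite (M ⧸ (maximalIdeal R ^ k • ⊤ : Submodule R M)) := by
  have : Finite (R ⧸ maximalIdeal R) := ‹Finite (ResidueField R)›
  have : Finite (R ⧸ maximalIdeal R ^ k) :=
    Ideal.finite_quotient_pow (IsNoetherian.noetherian _) k
  exact Submodule.finite_quotient_smul _ Module.Finite.fg_top

namespace Finite

variable {X : Type*} [Finite X]

theorem exists_eventually_periodic (f : ℕ → X) (hf : ∀ a b, f a = f b → f (a + 1) = f (b + 1)) :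
    ∃ i p, 0 < p ∧ ∀ s ≥ i, ∀ t, f (s + p * t) = f s := by
  have shift : ∀ c a b, f a = f b → f (a + c) = f (b + c) := fun c a b h => by
    induction c with
    | zero => exact h
    | succ c ih => exact hf _ _ ih
  obtain ⟨i, j, hij, hfij⟩ : ∃ i j, i < j ∧ f i = f j := by
    obtain ⟨a, b, hab, h⟩ := exists_ne_map_eq_of_infinite f
    rcases hab.lt_or_gt with hlt | hlt
    exacts [⟨a, b, hlt, h⟩, ⟨b, a, hlt, h.symm⟩]
  have period : ∀ s ≥ i, f (s + (j - i)) = f s := fun s hs => by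
    obtain ⟨c, rfl⟩ := Nat.exists_eq_add_of_le hs
    calc f (i + c + (j - i)) = f (j + c) := by congr 1; omega
      _ = f (i + c) := (shift c i j hfij).symm
  refine ⟨i, j - i, by omega, fun s hs t => ?_⟩
  induction t with
  | zero => rfl
  | succ t ih => rw [Nat.mul_succ, ← add_assoc, period _ (le_add_right hs), ih]

theorem exists_add_eq_of_factorial_dvd (f : ℕ → X)
    (hf : ∀ a b, f a = f b → f (a + 1) = f (b + 1)) :
    ∃ N, ∀ n ≥ N, ∀ s ≥ N, ∀ d, n.factorial ∣ d → f (s + d) = f s := by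
  obtain ⟨i, p, hp, hper⟩ := exists_eventually_periodic f hf
  refine ⟨max i p, fun n hn s hs d hd => ?_⟩
  obtain ⟨t, rfl⟩ := (Nat.dvd_factorial hp (le_of_max_le_right hn)).trans hd
  exact hper s (le_of_max_le_left hs) t

end Finite

section PowFactorial

variable {R A : Type*} [CommRing R] [Ring A] [Algebra R A] {I : Ideal R}

theorem exists_pow_add_smodEq_of_factorial_dvd
    (hfin : ∀ k, Finite (A ⧸ (I ^ k • ⊤ : Submodule R A))) (u : A) (k : ℕ) :
    ∃ N, ∀ n ≥ N, ∀ s ≥ N, ∀ d, n.factorial ∣ d →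
      u ^ (s + d) ≡ u ^ s [SMOD (I ^ k • ⊤ : Submodule R A)] :=
  have := hfin k
  Finite.exists_add_eq_of_factorial_dvd (fun n => Submodule.Quotient.mk (u ^ n)) fun a b h => by
    change u ^ (a + 1) ≡ u ^ (b + 1) [SMOD (I ^ k • ⊤ : Submodule R A)]
    simpa only [pow_succ, LinearMap.mulRight_apply] using
      (show u ^ a ≡ u ^ b [SMOD (I ^ k • ⊤ : Submodule R A)] from h).map_smul_top
        (LinearMap.mulRight R u)

theorem exists_adicTendsto_pow_factorial_sub [IsPrecomplete I A]
    (hfin : ∀ k, Finite (A ⧸ (I ^ k • ⊤ : Submodule R A))) (u : A) (c : ℕ) :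
    ∃ L, AdicTendsto I (fun n => u ^ (n.factorial - c)) L := by
  refine IsPrecomplete.exists_adicTendsto fun k => ?_
  obtain ⟨N, hN⟩ := exists_pow_add_smodEq_of_factorial_dvd hfin u k
  suffices h : ∀ m ≥ N + c, ∀ n ≥ m,
      u ^ (n.factorial - c) ≡ u ^ (m.factorial - c) [SMOD (I ^ k • ⊤ : Submodule R A)] from
    ⟨N + c, fun m hm n hn => (le_total m n).elim (fun hmn => (h m hm n hmn).symm) (h n hn m)⟩
  intro m hm n hmn
  have hm' : N + c ≤ m.factorial := hm.trans m.self_le_factorial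
  have hmn' : m.factorial ≤ n.factorial := Nat.factorial_le hmn
  have := hN m (by omega) (m.factorial - c) (by omega) (n.factorial - m.factorial)
    (Nat.dvd_sub (Nat.factorial_dvd_factorial hmn) dvd_rfl)
  rwa [show m.factorial - c + (n.factorial - m.factorial) = n.factorial - c by omega] at this

theorem isIdempotentElem_of_adicTendsto_pow_factorial [IsHausdorff I A]
    (hfin : ∀ k, Finite (A ⧸ (I ^ k • ⊤ : Submodule R A))) {u e : A}
    (he : AdicTendsto I (fun n => u ^ n.factorial) e) : IsIdempotentElem e := by
  refine (he.mul he).unique (he.congr fun k => ?_)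
  obtain ⟨N, hN⟩ := exists_pow_add_smodEq_of_factorial_dvd hfin u k
  refine eventually_atTop.mpr ⟨N, fun n hn => ?_⟩
  rw [← pow_add]
  exact (hN n hn n.factorial (hn.trans n.self_le_factorial) n.factorial dvd_rfl).symm

theorem eventually_pow_mul_smodEq_pow (hfin : ∀ k, Finite (A ⧸ (I ^ k • ⊤ : Submodule R A)))
    {u e : A} (he : AdicTendsto I (fun n => u ^ n.factorial) e) (k : ℕ) :
    ∀ᶠ n in atTop, u ^ n * e ≡ u ^ n [SMOD (I ^ k • ⊤ : Submodule R A)] := by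
  obtain ⟨N, hN⟩ := exists_pow_add_smodEq_of_factorial_dvd hfin u k
  refine eventually_atTop.mpr ⟨N, fun n hn => ?_⟩
  obtain ⟨m, hm, hmN⟩ := ((he k).and (eventually_ge_atTop N)).exists
  calc u ^ n * e ≡ u ^ n * u ^ m.factorial [SMOD (I ^ k • ⊤ : Submodule R A)] :=
        (hm.map_smul_top (LinearMap.mulLeft R (u ^ n))).symm
    _ = u ^ (n + m.factorial) := (pow_add u n m.factorial).symm
    _ ≡ u ^ n [SMOD (I ^ k • ⊤ : Submodule R A)] := hN m hmN n hn m.factorial dvd_rfl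

theorem mul_eq_of_adicTendsto_pow_factorial_sub_one [IsHausdorff I A] {u e v : A}
    (he : AdicTendsto I (fun n => u ^ n.factorial) e)
    (hv : AdicTendsto I (fun n => u ^ (n.factorial - 1)) v) : u * v = e ∧ v * u = e := by
  have hsucc (n : ℕ) : n.factorial - 1 + 1 = n.factorial := Nat.sub_add_cancel n.factorial_pos
  constructor
  · refine (hv.map (LinearMap.mulLeft R u)).unique ?_
    simpa only [LinearMap.mulLeft_apply, ← pow_succ', hsucc] using he
  · refine (hv.map (LinearMap.mulRight R u)).unique ?_
    simpa only [LinearMap.mulRight_apply, ← pow_succ, hsucc] using he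

end PowFactorial

theorem Set.bijOn_range_of_comp_eq {α : Type*} {u v e : α → α} (huv : ∀ x, u (v x) = e x)
    (hvu : ∀ x, v (u x) = e x) (he : ∀ x, e (e x) = e x) :
    Set.BijOn u (Set.range e) (Set.range e) := by
  have hue (x : α) : u (e x) = e (u x) := by rw [← hvu x, huv]
  have hve (x : α) : v (e x) = e (v x) := by rw [← huv x, hvu]
  refine Set.InvOn.bijOn (f' := v) ⟨?_, ?_⟩ ?_ ?_ <;> rintro _ ⟨x, rfl⟩
  exacts [by rw [hvu, he], by rw [huv, he], ⟨u x, (hue x).symm⟩, ⟨v x, (hve x).symm⟩]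

/-- Hida's ordinary projector.  Let `R` be a complete Noetherian local ring with maximal
ideal `m` and finite residue field, `M` a finitely generated `R`-module, and `u` an
`R`-linear endomorphism of `M`.  Then the sequence `(u^{n!})` converges `m`-adically in
`End_R(M)` to an idempotent `e` commuting with `u`, `u` restricts to a bijection of
`e·M = range e`, and on `(1 - e)·M` the powers of `u` tend to `0` `m`-adically. -/
theorem stmt3 (R : Type*) [CommRing R] [IsNoetherianRing R] [IsLocalRing R]
    [IsAdicComplete (IsLocalRing.maximalIdeal R) R] [Finite (IsLocalRing.ResidueField R)]
    (M : Type*) [AddCommGroup M] [Module R M] [Module.Finite R M]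
    (u : Module.End R M) :
    ∃ e : Module.End R M,
      (∀ k : ℕ, ∃ N : ℕ, ∀ n ≥ N,
        u ^ n.factorial - e ∈
          (IsLocalRing.maximalIdeal R ^ k) • (⊤ : Submodule R (Module.End R M))) ∧
      e * e = e ∧
      u * e = e * u ∧
      Set.BijOn ⇑u (LinearMap.range e : Set M) (LinearMap.range e : Set M) ∧
      ∀ k : ℕ, ∃ N : ℕ, ∀ n ≥ N, ∀ x : M,
        (u ^ n) (x - e x) ∈ (IsLocalRing.maximalIdeal R ^ k) • (⊤ : Submodule R M) := by
  have : IsPrecomplete (IsLocalRing.maximalIdeal R) (Module.End R M) := .of_finite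
  have hfin := IsLocalRing.finite_quotient_maximalIdeal_pow_smul_top (R := R) (Module.End R M)
  obtain ⟨e, he⟩ := exists_adicTendsto_pow_factorial_sub hfin u 0
  obtain ⟨v, hv⟩ := exists_adicTendsto_pow_factorial_sub hfin u 1
  simp only [Nat.sub_zero] at he
  have hee := isIdempotentElem_of_adicTendsto_pow_factorial hfin he
  obtain ⟨huv, hvu⟩ := mul_eq_of_adicTendsto_pow_factorial_sub_one he hv
  refine ⟨e, fun k => ?_, hee, by nth_rw 1 [← hvu]; rw [← mul_assoc, huv], ?_, fun k => ?_⟩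
  · obtain ⟨N, hN⟩ := eventually_atTop.mp (he k)
    exact ⟨N, fun n hn => SModEq.sub_mem.mp (hN n hn)⟩
  · rw [LinearMap.coe_range]
    exact Set.bijOn_range_of_comp_eq (LinearMap.congr_fun huv ·)
      (LinearMap.congr_fun hvu ·) (LinearMap.congr_fun hee.eq ·)
  · obtain ⟨N, hN⟩ := eventually_atTop.mp (eventually_pow_mul_smodEq_pow hfin he k)
    refine ⟨N, fun n hn x => ?_⟩
    simpa only [map_sub, LinearMap.applyₗ_apply_apply, Module.End.mul_apply] using
      SModEq.sub_mem.mp ((hN n hn).symm.map_smul_top (LinearMap.applyₗ x))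
end

section
/- Let O be a complete discrete valuation ring with maximal ideal m and fraction field of characteristic zero, and let f ∈ O[[X]] be a nonzero formal power series. Then the set {a ∈ m : f(a) = 0} of zeros of f in the maximal ideal is finite. -/
/-!
Suppose `f` had infinitely many zeros in `m`. Pick a nonzero coefficient `c_e` of `f` and `v`
with `c_e ∉ m^v`, and take `v + e` distinct zeros `a_i`. A long enough truncation `P` of `f` is
`m`-adically tiny at every `a_i`, so, up to a loss of precision depending only on the `a_i`
(the valuations of their differences), `P` is a multiple of `∏ (X - a_i)`. Since all `a_i`
lie in `m`, the coefficient of `X^e` of any such multiple lies in `m^v`, hence so does `c_e`.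
-/

open IsLocalRing Polynomial

namespace Polynomial

variable {R : Type*} [CommRing R] (I : Ideal R)

theorem coeff_prod_X_sub_C_mem_pow_tsub (s : Finset R) (hs : ∀ a ∈ s, a ∈ I) (j : ℕ) :
    (∏ a ∈ s, (X - C a)).coeff j ∈ I ^ (s.card - j) := by
  simpa using coeff_prod_mem_ideal_pow_tsub s (fun a ↦ X - C a) I (fun _ ↦ 1)
    (fun a ha k ↦ by
      rcases k with _ | k
      · simpa using hs a ha
      · simp [Ideal.one_eq_top]) j

theorem coeff_mul_mem_ideal_pow_tsub {A : R[X]} {n : ℕ} (hA : ∀ j, A.coeff j ∈ I ^ (n - j))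
    (B : R[X]) (k : ℕ) : (A * B).coeff k ∈ I ^ (n - k) := by
  rw [coeff_mul]
  refine Ideal.sum_mem _ fun p hp ↦ Ideal.mul_mem_right _ _ ?_
  exact Ideal.pow_le_pow_right
    (Nat.sub_le_sub_left (Finset.HasAntidiagonal.antidiagonal.fst_le hp) n) (hA p.1)

end Polynomial

theorem PowerSeries.eval_trunc_mem_pow {R : Type*} [CommRing R] {I : Ideal R}
    {f : PowerSeries R} {a : R} (ha : a ∈ I)
    (hf : ∀ k : ℕ, ∃ N : ℕ, ∀ n ≥ N,
      (∑ i ∈ Finset.range n, PowerSeries.coeff i f * a ^ i) ∈ I ^ k) (k : ℕ) :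
    (f.trunc k).eval a ∈ I ^ k := by
  obtain ⟨N, hN⟩ := hf k
  have htail : ∑ i ∈ Finset.Ico k (max N k), coeff i f * a ^ i ∈ I ^ k :=
    Ideal.sum_mem _ fun i hi ↦ Ideal.mul_mem_left _ _ <|
      Ideal.pow_le_pow_right (Finset.mem_Ico.mp hi).1 (Ideal.pow_mem_pow ha i)
  have hsum := sub_mem (hN _ (le_max_left N k)) htail
  rw [Finset.sum_Ico_eq_sub _ (le_max_right N k), sub_sub_cancel] at hsum
  simpa [eval, eval₂_trunc_eq_sum_range] using hsum

namespace IsDiscreteValuationRing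

variable {O : Type*} [CommRing O] [IsDomain O] [IsDiscreteValuationRing O]

theorem exists_mem_pow_of_mul_mem_pow_add {b : O} (hb : b ≠ 0) :
    ∃ w : ℕ, ∀ (k : ℕ) (x : O),
      b * x ∈ IsLocalRing.maximalIdeal O ^ (k + w) → x ∈ IsLocalRing.maximalIdeal O ^ k := by
  obtain ⟨ϖ, hϖ⟩ := exists_irreducible O
  obtain ⟨w, u, rfl⟩ := eq_unit_mul_pow_irreducible hb hϖ
  refine ⟨w, fun k x hx ↦ ?_⟩
  rw [hϖ.maximalIdeal_eq, Ideal.span_singleton_pow, Ideal.mem_span_singleton] at hx ⊢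
  rw [pow_add, mul_comm (ϖ ^ k), mul_comm (u : O), mul_assoc] at hx
  exact Units.dvd_mul_left.mp ((mul_dvd_mul_iff_left (pow_ne_zero w hϖ.ne_zero)).mp hx)

/-- A polynomial that is small at the points of `s` is, up to a loss of precision depending
only on `s`, a multiple of `∏ a ∈ s, (X - a)`. -/
theorem exists_sub_prod_X_sub_C_mul_mem_map_C (s : Finset O) :
    ∃ c : ℕ, ∀ (k : ℕ) (P : O[X]),
      (∀ a ∈ s, P.eval a ∈ IsLocalRing.maximalIdeal O ^ (k + c)) →
      ∃ Q : O[X], P - (∏ a ∈ s, (X - C a)) * Q ∈ (IsLocalRing.maximalIdeal O ^ k).map C := by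
  classical
  induction s using Finset.induction_on with
  | empty => exact ⟨0, fun k P _ ↦ ⟨P, by simp⟩⟩
  | insert a s ha ih =>
    obtain ⟨c, hc⟩ := ih
    have hprod : ∏ b ∈ s, (b - a) ≠ 0 :=
      Finset.prod_ne_zero_iff.mpr fun b hb ↦ sub_ne_zero.mpr (ne_of_mem_of_not_mem hb ha)
    obtain ⟨w, hw⟩ := exists_mem_pow_of_mul_mem_pow_add hprod
    refine ⟨c + w, fun k P hP ↦ ?_⟩
    obtain ⟨Q₁, hQ₁⟩ := X_sub_C_dvd_sub_C_eval (a := a) (p := P)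
    -- `(b - a) * Q₁(b) = P(b) - P(a)`, and `b - a` divides `∏ b ∈ s, (b - a)`.
    have hQ₁s : ∀ b ∈ s, Q₁.eval b ∈ IsLocalRing.maximalIdeal O ^ (k + c) := by
      intro b hb
      have hdiff : (b - a) * Q₁.eval b ∈ IsLocalRing.maximalIdeal O ^ (k + c + w) := by
        have := congrArg (eval b) hQ₁
        simp only [eval_sub, eval_mul, eval_C, eval_X] at this
        rw [← this, add_assoc]
        exact sub_mem (hP b (Finset.mem_insert_of_mem hb)) (hP a (Finset.mem_insert_self a s))
      obtain ⟨d, hd⟩ := Finset.dvd_prod_of_mem (fun b ↦ b - a) hb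
      refine hw _ _ ?_
      rw [hd, mul_comm (b - a), mul_assoc]
      exact Ideal.mul_mem_left _ _ hdiff
    obtain ⟨Q, hQ⟩ := hc k Q₁ hQ₁s
    refine ⟨Q, ?_⟩
    have hPa : C (P.eval a) ∈ (IsLocalRing.maximalIdeal O ^ k).map C :=
      Ideal.mem_map_of_mem _ (Ideal.pow_le_pow_right (Nat.le_add_right k _)
        (hP a (Finset.mem_insert_self a s)))
    have hdecomp : P - (∏ b ∈ insert a s, (X - C b)) * Q
        = C (P.eval a) + (X - C a) * (Q₁ - (∏ b ∈ s, (X - C b)) * Q) := by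
      rw [Finset.prod_insert ha]
      linear_combination hQ₁
    rw [hdecomp]
    exact add_mem hPa (Ideal.mul_mem_left _ _ hQ)

end IsDiscreteValuationRing

theorem stmt4_general (O : Type*) [CommRing O] [IsDomain O] [IsDiscreteValuationRing O]
    (f : PowerSeries O) (hf : f ≠ 0) :
    {a : O | a ∈ IsLocalRing.maximalIdeal O ∧
      ∀ k : ℕ, ∃ N : ℕ, ∀ n ≥ N,
        (∑ i ∈ Finset.range n, PowerSeries.coeff i f * a ^ i) ∈
          IsLocalRing.maximalIdeal O ^ k}.Finite := by
  by_contra hS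
  obtain ⟨e, he⟩ := PowerSeries.exists_coeff_ne_zero_iff_ne_zero.mpr hf
  obtain ⟨v, hv⟩ : ∃ v, PowerSeries.coeff e f ∉ maximalIdeal O ^ v := by
    by_contra! h
    have hbot :=
      Ideal.iInf_pow_eq_bot_of_isLocalRing (maximalIdeal O) (maximalIdeal.isMaximal O).ne_top
    exact he (Ideal.mem_bot.mp (hbot ▸ Ideal.mem_iInf.mpr h))
  obtain ⟨t, htS, htcard⟩ := Set.Infinite.exists_subset_card_eq hS (v + e)
  obtain ⟨c, hc⟩ := IsDiscreteValuationRing.exists_sub_prod_X_sub_C_mul_mem_map_C t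
  set P := f.trunc (v + c + e + 1)
  obtain ⟨Q, hQ⟩ := hc v P fun a ha ↦ Ideal.pow_le_pow_right (by omega)
    (PowerSeries.eval_trunc_mem_pow (htS ha).1 (htS ha).2 _)
  have hprodQ : ((∏ a ∈ t, (X - C a)) * Q).coeff e ∈ maximalIdeal O ^ v := by
    simpa [htcard] using coeff_mul_mem_ideal_pow_tsub _
      (coeff_prod_X_sub_C_mem_pow_tsub _ t fun a ha ↦ (htS ha).1) Q e
  have hPe : P.coeff e = PowerSeries.coeff e f := by
    simp [P, PowerSeries.coeff_trunc]
  apply hv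
  rw [← hPe, ← sub_add_cancel (P.coeff e), ← coeff_sub]
  exact add_mem (Ideal.mem_map_C_iff.mp hQ e) hprodQ

/-- Let `O` be a complete discrete valuation ring whose fraction field has characteristic
zero, with maximal ideal `m`, and let `f ∈ O[[X]]` be a nonzero formal power series.
Then the set of zeros of `f` in `m` is finite.  Here `f(a) = 0` for `a ∈ m` is expressed
by saying that the partial sums `Σ_{i<n} c_i a^i` converge to `0` in the `m`-adic
topology. -/
theorem stmt4 (O : Type*) [CommRing O] [IsDomain O] [IsDiscreteValuationRing O]
    [IsAdicComplete (IsLocalRing.maximalIdeal O) O] [CharZero O]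
    (f : PowerSeries O) (hf : f ≠ 0) :
    {a : O | a ∈ IsLocalRing.maximalIdeal O ∧
      ∀ k : ℕ, ∃ N : ℕ, ∀ n ≥ N,
        (∑ i ∈ Finset.range n, PowerSeries.coeff i f * a ^ i) ∈
          IsLocalRing.maximalIdeal O ^ k}.Finite :=
  stmt4_general O f hf
end

section
/- Let R be a Noetherian local ring with residue field k, and let C: C⁰ →^{d⁰} C¹ →^{d¹} C² be a complex (d¹ ∘ d⁰ = 0) of finite free R-modules. Suppose that after applying − ⊗_R k the resulting complex of k-vector spaces has vanishing cohomology in degrees 0 and 2, i.e. d⁰ ⊗ k is injective and d¹ ⊗ k is surjective. Then H⁰(C) = 0, H²(C) = 0, and H¹(C) = ker(d¹)/im(d⁰) is a free R-module of rank equal to dim_k H¹(C ⊗_R k). -/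
/-!
Over the local ring `R` with residue field `k`, Nakayama's lemma lifts surjectivity of `d¹ ⊗ k`
to surjectivity of `d¹`, and injectivity of `d⁰ ⊗ k` to `d⁰` being a split injection. As `C²` is
free, `d¹` splits, so `ker d¹` is a finite projective, hence free, module. The presentation
`C⁰ → ker d¹ → H¹ → 0` stays injective after `- ⊗ k`, which makes `H¹` free. Finally both
`C¹ ≅ ker d¹ ⊕ C²` and `ker d¹ ≅ C⁰ ⊕ H¹` give `rk H¹ = rk C¹ - rk C⁰ - rk C²`, and the same count
over `k` gives the same number.
-/

open IsLocalRing LinearMap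

/-- Instance search does not find `TensorProduct.addCommGroup` on its own when forming quotients
of kernels of base-changed maps. -/
instance stmt16TensorAddCommGroup {R k M : Type*} [CommRing R] [Field k] [Algebra R k]
    [AddCommGroup M] [Module R M] : AddCommGroup (TensorProduct R k M) :=
  TensorProduct.addCommGroup

section Complex

variable {R C0 C1 C2 : Type*} [CommRing R] [AddCommGroup C0] [AddCommGroup C1] [AddCommGroup C2]
  [Module R C0] [Module R C1] [Module R C2]

abbrev middleCohomology (d0 : C0 →ₗ[R] C1) (d1 : C1 →ₗ[R] C2) : Type _ :=
  ker d1 ⧸ (range d0).comap (ker d1).subtype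

theorem exact_codRestrict_ker_mkQ {d0 : C0 →ₗ[R] C1} {d1 : C1 →ₗ[R] C2} (hc : d1 ∘ₗ d0 = 0) :
    Function.Exact (d0.codRestrict (ker d1) fun x ↦ range_le_ker_iff.mpr hc (mem_range_self d0 x))
      ((range d0).comap (ker d1).subtype).mkQ := by
  rw [exact_iff, Submodule.ker_mkQ, range_codRestrict]

theorem Function.Exact.finrank_eq_add [StrongRankCondition R] {f : C0 →ₗ[R] C1}
    {g : C1 →ₗ[R] C2} (hfg : Function.Exact f g) (hf : Function.Injective f)
    (hg : Function.Surjective g) [Module.Free R C0] [Module.Finite R C0] [Module.Free R C2]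
    [Module.Finite R C2] :
    Module.finrank R C1 = Module.finrank R C0 + Module.finrank R C2 := by
  obtain ⟨e, -⟩ := ((hfg.split_tfae hf hg).out 0 2).mp
    (Module.projective_lifting_property g LinearMap.id hg)
  rw [e.finrank_eq, Module.finrank_prod]

theorem finrank_middleCohomology_add [StrongRankCondition R] {d0 : C0 →ₗ[R] C1}
    {d1 : C1 →ₗ[R] C2} (hc : d1 ∘ₗ d0 = 0) (h0 : Function.Injective d0)
    (h1 : Function.Surjective d1) [Module.Free R C0] [Module.Finite R C0] [Module.Free R C2]
    [Module.Finite R C2] [Module.Free R (ker d1)] [Module.Finite R (ker d1)]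
    [Module.Free R (middleCohomology d0 d1)] [Module.Finite R (middleCohomology d0 d1)] :
    Module.finrank R C0 + Module.finrank R (middleCohomology d0 d1) + Module.finrank R C2 =
      Module.finrank R C1 := by
  rw [d1.exact_subtype_ker_map.finrank_eq_add (ker d1).injective_subtype h1,
    (exact_codRestrict_ker_mkQ hc).finrank_eq_add (fun x y h ↦ h0 congr(($h).1))
      (Submodule.mkQ_surjective _)]

theorem exists_leftInverse_subtype_ker [Module.Projective R C2] {g : C1 →ₗ[R] C2}
    (hg : Function.Surjective g) : ∃ l : C1 →ₗ[R] ker g, l ∘ₗ (ker g).subtype = LinearMap.id :=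
  ((g.exact_subtype_ker_map.split_tfae (ker g).injective_subtype hg).out 0 1).mp
    (Module.projective_lifting_property g LinearMap.id hg)

theorem Module.Finite.ker_of_surjective [Module.Finite R C1] [Module.Projective R C2]
    {g : C1 →ₗ[R] C2} (hg : Function.Surjective g) : Module.Finite R (ker g) :=
  have ⟨l, hl⟩ := exists_leftInverse_subtype_ker hg
  .of_surjective l fun x ↦ ⟨x, congr($hl x)⟩

theorem Module.Free.ker_of_surjective [IsLocalRing R] [Module.Finite R C1]
    [Module.Projective R C1] [Module.Projective R C2] {g : C1 →ₗ[R] C2}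
    (hg : Function.Surjective g) : Module.Free R (ker g) :=
  have := Module.Finite.ker_of_surjective hg
  have ⟨l, hl⟩ := exists_leftInverse_subtype_ker hg
  have := Module.Projective.of_split (ker g).subtype l hl
  Module.free_of_flat_of_isLocalRing

theorem surjective_of_baseChange_residueField_surjective [IsLocalRing R] [Module.Finite R C2]
    {f : C1 →ₗ[R] C2} (hf : Function.Surjective (f.baseChange (ResidueField R))) :
    Function.Surjective f := by
  rw [← range_eq_top, ← Submodule.Quotient.subsingleton_iff,
    ← IsLocalRing.subsingleton_tensorProduct (R := R)]
  -- `k ⊗ (C2 ⧸ range f)` is the image of `k ⊗ C2`, which `k ⊗ f` covers and `k ⊗ mkQ` kills.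
  have hzero : Function.Surjective (((range f).mkQ ∘ₗ f).baseChange (ResidueField R)) := by
    rw [baseChange_comp]
    exact (baseChange_surjective _ (range f).mkQ_surjective).comp hf
  rw [range_mkQ_comp, baseChange_zero] at hzero
  refine ⟨fun a b ↦ ?_⟩
  obtain ⟨x, rfl⟩ := hzero a
  obtain ⟨y, rfl⟩ := hzero b
  rfl

theorem free_middleCohomology [IsLocalRing R] [Module.Finite R C0] {d0 : C0 →ₗ[R] C1}
    {d1 : C1 →ₗ[R] C2} [Module.Free R (ker d1)] [Module.Finite R (ker d1)] (hc : d1 ∘ₗ d0 = 0)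
    (h0 : Function.Injective (d0.baseChange (ResidueField R))) :
    Module.Free R (middleCohomology d0 d1) := by
  refine Module.free_of_lTensor_residueField_injective _ _ (Submodule.mkQ_surjective _)
    (exact_codRestrict_ker_mkQ hc)
    (Function.Injective.of_comp (f := (ker d1).subtype.lTensor _) ?_)
  rwa [← coe_comp, ← lTensor_comp, subtype_comp_codRestrict, ← baseChange_eq_ltensor]

end Complex

theorem stmt16_general (R : Type*) [CommRing R] [IsLocalRing R]
    (C0 C1 C2 : Type*) [AddCommGroup C0] [AddCommGroup C1] [AddCommGroup C2]
    [Module R C0] [Module R C1] [Module R C2]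
    [Module.Free R C0] [Module.Finite R C0] [Module.Free R C1] [Module.Finite R C1]
    [Module.Free R C2] [Module.Finite R C2]
    (d0 : C0 →ₗ[R] C1) (d1 : C1 →ₗ[R] C2) (hc : d1 ∘ₗ d0 = 0)
    (hinj : Function.Injective (LinearMap.baseChange (IsLocalRing.ResidueField R) d0))
    (hsurj : Function.Surjective (LinearMap.baseChange (IsLocalRing.ResidueField R) d1)) :
    LinearMap.ker d0 = ⊥ ∧
    LinearMap.range d1 = ⊤ ∧
    Module.Free R
      (LinearMap.ker d1 ⧸ (LinearMap.range d0).comap (LinearMap.ker d1).subtype) ∧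
    Module.finrank R
        (LinearMap.ker d1 ⧸ (LinearMap.range d0).comap (LinearMap.ker d1).subtype) =
      Module.finrank (IsLocalRing.ResidueField R)
        (LinearMap.ker (LinearMap.baseChange (IsLocalRing.ResidueField R) d1) ⧸
          (LinearMap.range (LinearMap.baseChange (IsLocalRing.ResidueField R) d0)).comap
            (LinearMap.ker
              (LinearMap.baseChange (IsLocalRing.ResidueField R) d1)).subtype) := by
  obtain ⟨l, hl⟩ := (split_injective_iff_lTensor_residueField_injective d0).mpr
    (by rwa [← baseChange_eq_ltensor])
  have hd0 : Function.Injective d0 := Function.HasLeftInverse.injective ⟨l, LinearMap.congr_fun hl⟩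
  have hd1 := surjective_of_baseChange_residueField_surjective hsurj
  have := Module.Finite.ker_of_surjective hd1
  have := Module.Free.ker_of_surjective hd1
  have hH := free_middleCohomology hc hinj
  have hck : d1.baseChange (ResidueField R) ∘ₗ d0.baseChange (ResidueField R) = 0 := by
    rw [← baseChange_comp, hc, baseChange_zero]
  have hrkR := finrank_middleCohomology_add hc hd0 hd1
  have hrkk := finrank_middleCohomology_add hck hinj hsurj
  simp only [Module.finrank_baseChange, middleCohomology] at hrkR hrkk
  exact ⟨ker_eq_bot.mpr hd0, range_eq_top.mpr hd1, hH, by omega⟩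

/-- Let `R` be a Noetherian local ring with residue field `k`, and
`C : C⁰ → C¹ → C²` a complex of finite free `R`-modules.  If after applying `− ⊗_R k`
the resulting complex of `k`-vector spaces has vanishing cohomology in degrees 0 and 2
(i.e. `d⁰ ⊗ k` is injective and `d¹ ⊗ k` is surjective), then `H⁰(C) = 0`, `H²(C) = 0`,
and `H¹(C) = ker d¹ / im d⁰` is a free `R`-module of rank `dim_k H¹(C ⊗_R k)`. -/
theorem stmt16 (R : Type*) [CommRing R] [IsNoetherianRing R] [IsLocalRing R]
    (C0 C1 C2 : Type*) [AddCommGroup C0] [AddCommGroup C1] [AddCommGroup C2]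
    [Module R C0] [Module R C1] [Module R C2]
    [Module.Free R C0] [Module.Finite R C0] [Module.Free R C1] [Module.Finite R C1]
    [Module.Free R C2] [Module.Finite R C2]
    (d0 : C0 →ₗ[R] C1) (d1 : C1 →ₗ[R] C2) (hc : d1 ∘ₗ d0 = 0)
    (hinj : Function.Injective (LinearMap.baseChange (IsLocalRing.ResidueField R) d0))
    (hsurj : Function.Surjective (LinearMap.baseChange (IsLocalRing.ResidueField R) d1)) :
    LinearMap.ker d0 = ⊥ ∧
    LinearMap.range d1 = ⊤ ∧
    Module.Free R
      (LinearMap.ker d1 ⧸ (LinearMap.range d0).comap (LinearMap.ker d1).subtype) ∧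
    Module.finrank R
        (LinearMap.ker d1 ⧸ (LinearMap.range d0).comap (LinearMap.ker d1).subtype) =
      Module.finrank (IsLocalRing.ResidueField R)
        (LinearMap.ker (LinearMap.baseChange (IsLocalRing.ResidueField R) d1) ⧸
          (LinearMap.range (LinearMap.baseChange (IsLocalRing.ResidueField R) d0)).comap
            (LinearMap.ker
              (LinearMap.baseChange (IsLocalRing.ResidueField R) d1)).subtype) :=
  stmt16_general R C0 C1 C2 d0 d1 hc hinj hsurj
end
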